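/- Corollary (weights achieving 1-strong convexity of composite dilated DGFs). Under the chain-of-scaled-extensions setup, suppose the coefficients are chosen recursively as α_n := 2 and α_k := 2 + 2·‖ Σ_{p=k}^{n−1} α_{p+1}·‖a_p‖₀·a_{p,k} ‖_∞ for k = n−1,…,1. Then for all x, x′ ∈ (relint X_1) ◁^{h_1} ⋯ ◁^{h_{n−1}} (relint X_n), the composite DGF d satisfies ⟨∇d(x) − ∇d(x′), x − x′⟩ ≥ ‖x − x′‖₂², i.e., d is 1-strongly convex with respect to the Euclidean norm. -/

import Mathlib

/-!
Write each block as `x_k = t_k • y_k` with `y_k ∈ relint X_k` and `t_k` its scale (`t_1 = 1`).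
The gradient of the summand `α_k d_k^□` is `α_k` times the gradient of the perspective
`(x, t) ↦ t · d_k(x / t)`, pulled back along the linear map `t = t_k(x)`; strong convexity and the
first-order inequality of `d_k` bound its pairing with `x - x'` below by
`α_k (‖x_k - x'_k‖² / 2 - (t_k - t'_k)²)`. Scale differences are linear in earlier blocks,
`t_p - t'_p = ∑_{q<p} ⟪a_{p,q}, x_q - x'_q⟫`, so Cauchy–Schwarz over the `‖a_p‖₀` nonzero
coefficients gives `∑_p α_p (t_p - t'_p)² ≤ ∑_q M_q ‖x_q - x'_q‖²` with
`M_q = ‖∑_{p>q} α_p ‖a_p‖₀ a_{p,q}‖_∞`. As `α_q / 2 = 1 + M_q`, this loss is absorbed and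
`∑_q ‖x_q - x'_q‖²` remains.
-/

open Finset
open scoped RealInnerProductSpace

section IntrinsicInterior

variable {E : Type*} [NormedAddCommGroup E] [NormedSpace ℝ E] {s : Set E}

theorem mem_intrinsicInterior_iff_exists_ball {w : E} :
    w ∈ intrinsicInterior ℝ s ↔
      w ∈ affineSpan ℝ s ∧ ∃ ε > 0, ∀ p ∈ affineSpan ℝ s, dist p w < ε → p ∈ s := by
  simp only [mem_intrinsicInterior, mem_interior_iff_mem_nhds, Metric.mem_nhds_iff,
    Set.subset_def, Metric.mem_ball, Subtype.dist_eq, Set.mem_preimage, Subtype.forall]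
  constructor
  · rintro ⟨⟨w, hw⟩, ⟨ε, hε, hball⟩, rfl⟩
    exact ⟨hw, ε, hε, hball⟩
  · rintro ⟨hw, ε, hε, hball⟩
    exact ⟨⟨w, hw⟩, ⟨ε, hε, hball⟩, rfl⟩

protected theorem Convex.intrinsicInterior (hs : Convex ℝ s) :
    Convex ℝ (intrinsicInterior ℝ s) := by
  intro w hw w' hw' μ μ' hμ hμ' hμμ'
  rw [mem_intrinsicInterior_iff_exists_ball] at hw hw' ⊢
  obtain ⟨hwA, ε, hε, hball⟩ := hw
  obtain ⟨hwA', ε', hε', hball'⟩ := hw'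
  set z := μ • w + μ' • w'
  have hzA : z ∈ affineSpan ℝ s := (affineSpan ℝ s).convex hwA hwA' hμ hμ' hμμ'
  refine ⟨hzA, min ε ε', lt_min hε hε', fun p hp hpz => ?_⟩
  -- `p` is the same convex combination of the translates `w + (p - z)`, `w' + (p - z)` of `w`, `w'`
  have shift : ∀ c ∈ affineSpan ℝ s, (p - z) + c ∈ affineSpan ℝ s := fun c hc =>
    AffineSubspace.vadd_mem_of_mem_direction (AffineSubspace.vsub_mem_direction hp hzA) hc
  have hdist : ∀ c, dist ((p - z) + c) c = dist p z := fun c => by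
    simp [dist_eq_norm]
  have h := hs (hball _ (shift w hwA) ((hdist w).trans_lt (hpz.trans_le (min_le_left _ _))))
    (hball' _ (shift w' hwA') ((hdist w').trans_lt (hpz.trans_le (min_le_right _ _))))
    hμ hμ' hμμ'
  convert h using 1
  obtain rfl : μ' = 1 - μ := by linarith
  module

end IntrinsicInterior

section InnerProduct

variable {E : Type*} [NormedAddCommGroup E] [InnerProductSpace ℝ E]

theorem Convex.add_inner_le_of_hasGradientAt_of_monotone [CompleteSpace E] {S : Set E}
    (hS : Convex ℝ S) {f : E → ℝ} {g : E → E} (hf : ∀ z ∈ S, HasGradientAt f (g z) z)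
    (hg : ∀ z ∈ S, ∀ z' ∈ S, 0 ≤ ⟪g z - g z', z - z'⟫) {u u' : E} (hu : u ∈ S)
    (hu' : u' ∈ S) : f u' + ⟪g u', u - u'⟫ ≤ f u := by
  set L : ℝ → E := fun τ => u' + τ • (u - u')
  have hL : ∀ τ ∈ Set.Icc (0 : ℝ) 1, L τ ∈ S := fun τ hτ => hS.add_smul_sub_mem hu' hu hτ
  have hderiv : ∀ τ ∈ Set.Icc (0 : ℝ) 1, HasDerivAt (f ∘ L) ⟪g (L τ), u - u'⟫ τ := by
    intro τ hτ
    have hline : HasDerivAt L (u - u') τ :=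
      (((hasDerivAt_id τ).smul_const (u - u')).const_add u').congr_deriv (one_smul ℝ _)
    simpa using (hf _ (hL τ hτ)).hasFDerivAt.comp_hasDerivAt τ hline
  obtain ⟨c, hc, hslope⟩ := exists_hasDerivAt_eq_slope (f ∘ L) _ one_pos
    (fun τ hτ => (hderiv τ hτ).continuousAt.continuousWithinAt)
    (fun τ hτ => hderiv τ (Set.Ioo_subset_Icc_self hτ))
  have hmono : 0 ≤ c * ⟪g (L c) - g u', u - u'⟫ := by
    have := hg _ (hL c (Set.Ioo_subset_Icc_self hc)) _ hu'
    rwa [show L c - u' = c • (u - u') by simp [L], real_inner_smul_right] at this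
  have hslope' : f u - f u' = ⟪g (L c), u - u'⟫ := by simpa [L] using hslope.symm
  rw [inner_sub_left] at hmono
  nlinarith [hc.1]

theorem perspective_block_of_le {u u' v v' : E} {f f' t t' : ℝ} (hu : ‖u‖ ≤ 1)
    (ht'0 : 0 ≤ t') (ht'1 : t' ≤ 1) (htt' : t' ≤ t)
    (hmono : ‖u - u'‖ ^ 2 ≤ ⟪v - v', u - u'⟫) (hfirst : f' + ⟪v', u - u'⟫ ≤ f) :
    ‖t • u - t' • u'‖ ^ 2 / 2 - (t - t') ^ 2 ≤
      ⟪v - v', t • u - t' • u'⟫ + (f - ⟪v, u⟫ - (f' - ⟪v', u'⟫)) * (t - t') := by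
  have hsplit : t • u - t' • u' = t' • (u - u') + (t - t') • u := by module
  have hnorm : ‖t • u - t' • u'‖ ≤ t' * ‖u - u'‖ + (t - t') := by
    calc ‖t • u - t' • u'‖ ≤ t' * ‖u - u'‖ + (t - t') * ‖u‖ := by
          rw [hsplit]
          refine (norm_add_le _ _).trans_eq ?_
          rw [norm_smul, norm_smul, Real.norm_of_nonneg ht'0,
            Real.norm_of_nonneg (sub_nonneg.2 htt')]
      _ ≤ t' * ‖u - u'‖ + (t - t') := by
          gcongr; exact mul_le_of_le_one_right (sub_nonneg.2 htt') hu
  have hinner :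
      ⟪v - v', t • u - t' • u'⟫ = t' * ⟪v - v', u - u'⟫ + (t - t') * ⟪v - v', u⟫ := by
    rw [hsplit, inner_add_right, real_inner_smul_right, real_inner_smul_right]
  have hoffset : -⟪v - v', u⟫ ≤ f - ⟪v, u⟫ - (f' - ⟪v', u'⟫) := by
    rw [inner_sub_right] at hfirst
    rw [inner_sub_left]
    linarith
  have hlower : t' * ‖u - u'‖ ^ 2 ≤
      ⟪v - v', t • u - t' • u'⟫ + (f - ⟪v, u⟫ - (f' - ⟪v', u'⟫)) * (t - t') := by
    rw [hinner]
    nlinarith [mul_le_mul_of_nonneg_right hoffset (sub_nonneg.2 htt'),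
      mul_le_mul_of_nonneg_left hmono ht'0]
  have hupper : ‖t • u - t' • u'‖ ^ 2 / 2 - (t - t') ^ 2 ≤ t' * ‖u - u'‖ ^ 2 := by
    nlinarith [pow_le_pow_left₀ (norm_nonneg _) hnorm 2, sq_nonneg (t' * ‖u - u'‖ - (t - t')),
      mul_le_mul_of_nonneg_right ht'1 (mul_nonneg ht'0 (sq_nonneg ‖u - u'‖))]
  exact hupper.trans hlower

theorem perspective_block {u u' v v' : E} {f f' t t' : ℝ} (hu : ‖u‖ ≤ 1) (hu' : ‖u'‖ ≤ 1)
    (ht0 : 0 ≤ t) (ht1 : t ≤ 1) (ht'0 : 0 ≤ t') (ht'1 : t' ≤ 1)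
    (hmono : ‖u - u'‖ ^ 2 ≤ ⟪v - v', u - u'⟫) (hfirst : f' + ⟪v', u - u'⟫ ≤ f)
    (hfirst' : f + ⟪v, u' - u⟫ ≤ f') :
    ‖t • u - t' • u'‖ ^ 2 / 2 - (t - t') ^ 2 ≤
      ⟪v - v', t • u - t' • u'⟫ + (f - ⟪v, u⟫ - (f' - ⟪v', u'⟫)) * (t - t') := by
  rcases le_total t' t with htt' | htt'
  · exact perspective_block_of_le hu ht'0 ht'1 htt' hmono hfirst
  · have hmono' : ‖u' - u‖ ^ 2 ≤ ⟪v' - v, u' - u⟫ := by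
      rwa [norm_sub_rev, ← neg_sub v, ← neg_sub u, inner_neg_neg]
    have h := perspective_block_of_le hu' ht0 ht1 htt' hmono' hfirst'
    rw [norm_sub_rev, ← neg_sub v, ← neg_sub (t • u), inner_neg_neg] at h
    linarith

theorem perspective_block_of_mem_intrinsicInterior [CompleteSpace E] {S : Set E}
    (hS : Convex ℝ S) (hS1 : ∀ v ∈ S, ‖v‖ ≤ 1) {f : E → ℝ} {g : E → E}
    (hf : ∀ z ∈ intrinsicInterior ℝ S, HasGradientAt f (g z) z)
    (hg : ∀ z ∈ intrinsicInterior ℝ S, ∀ z' ∈ intrinsicInterior ℝ S,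
      ⟪g z - g z', z - z'⟫ ≥ ‖z - z'‖ ^ 2)
    {u u' : E} (hu : u ∈ intrinsicInterior ℝ S) (hu' : u' ∈ intrinsicInterior ℝ S)
    {t t' : ℝ} (ht0 : 0 ≤ t) (ht1 : t ≤ 1) (ht'0 : 0 ≤ t') (ht'1 : t' ≤ 1) :
    ‖t • u - t' • u'‖ ^ 2 / 2 - (t - t') ^ 2 ≤
      ⟪g u - g u', t • u - t' • u'⟫ + (f u - ⟪g u, u⟫ - (f u' - ⟪g u', u'⟫)) * (t - t') := by
  have hmono : ∀ z ∈ intrinsicInterior ℝ S, ∀ z' ∈ intrinsicInterior ℝ S,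
      0 ≤ ⟪g z - g z', z - z'⟫ := fun z hz z' hz' => (sq_nonneg _).trans (hg z hz z' hz')
  have hconv := hS.intrinsicInterior
  exact perspective_block (hS1 u (intrinsicInterior_subset hu))
    (hS1 u' (intrinsicInterior_subset hu')) ht0 ht1 ht'0 ht'1 (hg u hu u' hu')
    (hconv.add_inner_le_of_hasGradientAt_of_monotone hf hmono hu hu')
    (hconv.add_inner_le_of_hasGradientAt_of_monotone hf hmono hu' hu)

end InnerProduct

theorem Finset.sum_le_card_filter_ne_zero {ι R : Type*} [Semiring R] [PartialOrder R]
    [IsOrderedAddMonoid R] [DecidableEq R] (s : Finset ι) {f : ι → R}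
    (hf : ∀ i ∈ s, f i ≤ 1) : ∑ i ∈ s, f i ≤ #{i ∈ s | f i ≠ 0} := by
  rw [← sum_filter_ne_zero]
  calc ∑ i ∈ s with f i ≠ 0, f i ≤ ∑ i ∈ s with f i ≠ 0, (1 : R) :=
        sum_le_sum fun i hi => hf i (mem_filter.1 hi).1
    _ = #{i ∈ s | f i ≠ 0} := by simp

theorem sq_sum_mul_le_card_mul_sum_mul_sq {ι R : Type*} [CommRing R] [LinearOrder R]
    [IsStrictOrderedRing R] [DecidableEq R] (s : Finset ι) {a : ι → R}
    (ha0 : ∀ i ∈ s, 0 ≤ a i) (ha1 : ∀ i ∈ s, a i ≤ 1) (w : ι → R) :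
    (∑ i ∈ s, a i * w i) ^ 2 ≤ #{i ∈ s | a i ≠ 0} * ∑ i ∈ s, a i * w i ^ 2 := by
  have hsum : 0 ≤ ∑ i ∈ s, a i * w i ^ 2 :=
    sum_nonneg fun i hi => mul_nonneg (ha0 i hi) (sq_nonneg _)
  calc (∑ i ∈ s, a i * w i) ^ 2 ≤ (∑ i ∈ s, a i) * ∑ i ∈ s, a i * w i ^ 2 :=
        sum_sq_le_sum_mul_sum_of_sq_le_mul s ha0
          (fun i hi => mul_nonneg (ha0 i hi) (sq_nonneg _)) fun i _ => le_of_eq (by ring)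
    _ ≤ #{i ∈ s | a i ≠ 0} * ∑ i ∈ s, a i * w i ^ 2 :=
        mul_le_mul_of_nonneg_right (sum_le_card_filter_ne_zero s ha1) hsum

theorem Finset.sum_filter_lt_comm {ι β : Type*} [Fintype ι] [LT ι] [DecidableLT ι]
    [AddCommMonoid β] (f : ι → ι → β) :
    ∑ p, ∑ q ∈ univ.filter (· < p), f p q = ∑ q, ∑ p ∈ univ.filter (q < ·), f p q :=
  sum_comm' fun _ _ => by simp

namespace ScaledChain

variable {n : ℕ} {s : Fin n → ℕ} (a : (p : Fin n) → (q : Fin n) → EuclideanSpace ℝ (Fin (s q)))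

/-- The paper's `h_{p-1}(x_1, …, x_{p-1})`, with blocks indexed from `0`. Block `0` is not
scaled: `scale a 0` is the empty sum `0`, while `blockScale a 0 = 1`. -/
noncomputable def scale (p : Fin n) (x : (k : Fin n) → EuclideanSpace ℝ (Fin (s k))) : ℝ :=
  ∑ q ∈ univ.filter (· < p), ⟪a p q, x q⟫

noncomputable def blockScale (p : Fin n) (x : (k : Fin n) → EuclideanSpace ℝ (Fin (s k))) : ℝ :=
  if p.val = 0 then 1 else scale a p x

noncomputable def supportCard (p : Fin n) : ℕ :=
  ∑ q ∈ univ.filter (· < p), #(univ.filter fun i => a p q i ≠ 0)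

theorem scale_sub (p : Fin n) (x x' : (k : Fin n) → EuclideanSpace ℝ (Fin (s k))) :
    scale a p x - scale a p x' = scale a p (x - x') := by
  simp only [scale, ← sum_sub_distrib, ← inner_sub_right, Pi.sub_apply]

theorem blockScale_sub_blockScale (p : Fin n)
    (x x' : (k : Fin n) → EuclideanSpace ℝ (Fin (s k))) :
    blockScale a p x - blockScale a p x' = scale a p (x - x') := by
  unfold blockScale
  split_ifs with hp
  · have : univ.filter (· < p) = ∅ := by
      ext q
      simp [Fin.lt_def, hp]
    simp [scale, this]
  · exact scale_sub a p x x'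

theorem sq_scale_le (p : Fin n) (ha : ∀ q < p, ∀ i, a p q i ∈ Set.Icc 0 1)
    (z : (k : Fin n) → EuclideanSpace ℝ (Fin (s k))) :
    scale a p z ^ 2 ≤ supportCard a p * ∑ q ∈ univ.filter (· < p), ∑ i, a p q i * z q i ^ 2 := by
  set T := (univ.filter (· < p)).sigma fun q => (univ : Finset (Fin (s q)))
  have hscale : scale a p z = ∑ j ∈ T, a p j.1 j.2 * z j.1 j.2 := by
    simp [T, scale, sum_sigma, PiLp.inner_apply, mul_comm]
  have hcard : #{j ∈ T | a p j.1 j.2 ≠ 0} = supportCard a p := by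
    rw [filter_sigma' _ _ fun q i => a p q i ≠ 0, card_sigma, supportCard]
  have hbound := sq_sum_mul_le_card_mul_sum_mul_sq T (a := fun j => a p j.1 j.2)
    (fun j hj => (ha j.1 (by simpa [T] using hj) j.2).1)
    (fun j hj => (ha j.1 (by simpa [T] using hj) j.2).2) (fun j => z j.1 j.2)
  rwa [← hscale, hcard, sum_sigma] at hbound

theorem sum_mul_sq_scale_le (ha : ∀ p q, q < p → ∀ i, a p q i ∈ Set.Icc 0 1) {α M : Fin n → ℝ}
    (hα : ∀ p, 0 ≤ α p)
    (hM : ∀ q i, ∑ p ∈ univ.filter (q < ·), α p * supportCard a p * a p q i ≤ M q)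
    (z : (k : Fin n) → EuclideanSpace ℝ (Fin (s k))) :
    ∑ p, α p * scale a p z ^ 2 ≤ ∑ q, M q * ‖z q‖ ^ 2 := by
  calc ∑ p, α p * scale a p z ^ 2
      ≤ ∑ p, α p * (supportCard a p * ∑ q ∈ univ.filter (· < p), ∑ i, a p q i * z q i ^ 2) :=
        sum_le_sum fun p _ => mul_le_mul_of_nonneg_left (sq_scale_le a p (ha p) z) (hα p)
    _ = ∑ q, ∑ i, (∑ p ∈ univ.filter (q < ·), α p * supportCard a p * a p q i) * z q i ^ 2 := by
        simp only [mul_sum, sum_mul]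
        rw [sum_filter_lt_comm]
        refine sum_congr rfl fun q _ => sum_comm.trans (sum_congr rfl fun i _ => ?_)
        exact sum_congr rfl fun p _ => by ring
    _ ≤ ∑ q, ∑ i, M q * z q i ^ 2 := by
        gcongr with q _ i _
        exact hM q i
    _ = ∑ q, M q * ‖z q‖ ^ 2 := by simp only [EuclideanSpace.real_norm_sq_eq, mul_sum]

theorem sum_inner_sum_smul (c : Fin n → ℝ) (z : (k : Fin n) → EuclideanSpace ℝ (Fin (s k))) :
    ∑ k, ⟪∑ p ∈ univ.filter (k < ·), c p • a p k, z k⟫ = ∑ p, c p * scale a p z := by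
  simp only [sum_inner, real_inner_smul_left, scale, mul_sum]
  exact (sum_filter_lt_comm fun p k => c p * ⟪a p k, z k⟫).symm

theorem sum_inner_sub_eq (α c c' : Fin n → ℝ)
    (w w' x x' : (k : Fin n) → EuclideanSpace ℝ (Fin (s k))) :
    ∑ k, ⟪(α k • w k + ∑ p ∈ univ.filter (k < ·), (α p * c p) • a p k)
        - (α k • w' k + ∑ p ∈ univ.filter (k < ·), (α p * c' p) • a p k), x k - x' k⟫
      = ∑ k, α k * (⟪w k - w' k, x k - x' k⟫ + (c k - c' k) * scale a k (x - x')) := by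
  have hdiff : ∑ k, ⟪∑ p ∈ univ.filter (k < ·), (α p * (c p - c' p)) • a p k, x k - x' k⟫
      = ∑ p, α p * (c p - c' p) * scale a p (x - x') :=
    sum_inner_sum_smul a _ (x - x')
  have hsub : ∀ k, (α k • w k + ∑ p ∈ univ.filter (k < ·), (α p * c p) • a p k)
      - (α k • w' k + ∑ p ∈ univ.filter (k < ·), (α p * c' p) • a p k)
      = α k • (w k - w' k) + ∑ p ∈ univ.filter (k < ·), (α p * (c p - c' p)) • a p k := by
    intro k
    simp only [add_sub_add_comm, smul_sub, ← sum_sub_distrib, ← sub_smul, mul_sub]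
  simp only [hsub, inner_add_left, real_inner_smul_left]
  rw [sum_add_distrib, hdiff, ← sum_add_distrib]
  exact sum_congr rfl fun k _ => by ring

noncomputable def couplingNorm (hs : ∀ k, 0 < s k) (α : Fin n → ℝ) (k : Fin n) : ℝ :=
  univ.sup' (univ_nonempty_iff.mpr (Fin.pos_iff_nonempty.mp (hs k))) fun i =>
    |∑ p ∈ univ.filter (k < ·), α p * supportCard a p * a p k i|

theorem le_couplingNorm (hs : ∀ k, 0 < s k) (α : Fin n → ℝ) (k : Fin n) (i : Fin (s k)) :
    ∑ p ∈ univ.filter (k < ·), α p * supportCard a p * a p k i ≤ couplingNorm a hs α k :=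
  (le_abs_self _).trans <| le_sup'
    (fun i => |∑ p ∈ univ.filter (k < ·), α p * supportCard a p * a p k i|) (mem_univ i)

theorem couplingNorm_nonneg (hs : ∀ k, 0 < s k) (α : Fin n → ℝ) (k : Fin n) :
    0 ≤ couplingNorm a hs α k :=
  (abs_nonneg _).trans <| le_sup'
    (fun i => |∑ p ∈ univ.filter (k < ·), α p * supportCard a p * a p k i|) (mem_univ ⟨0, hs k⟩)

theorem sum_norm_sq_le_sum_mul (hs : ∀ k, 0 < s k)
    (ha : ∀ p q, q < p → ∀ i, a p q i ∈ Set.Icc 0 1) {α : Fin n → ℝ}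
    (hα : ∀ k, α k = 2 + 2 * couplingNorm a hs α k)
    (z : (k : Fin n) → EuclideanSpace ℝ (Fin (s k))) {B : Fin n → ℝ}
    (hB : ∀ k, ‖z k‖ ^ 2 / 2 - scale a k z ^ 2 ≤ B k) :
    ∑ k, ‖z k‖ ^ 2 ≤ ∑ k, α k * B k := by
  set M := couplingNorm a hs α
  have hα0 : ∀ k, 0 ≤ α k := fun k => by rw [hα]; linarith [couplingNorm_nonneg a hs α k]
  have hscale := sum_mul_sq_scale_le a ha hα0 (le_couplingNorm a hs α) z
  calc ∑ k, ‖z k‖ ^ 2 = ∑ k, α k * (‖z k‖ ^ 2 / 2) - ∑ k, M k * ‖z k‖ ^ 2 := by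
        rw [← sum_sub_distrib]
        exact sum_congr rfl fun k _ => by rw [hα]; ring
    _ ≤ ∑ k, α k * (‖z k‖ ^ 2 / 2) - ∑ k, α k * scale a k z ^ 2 := by linarith
    _ = ∑ k, α k * (‖z k‖ ^ 2 / 2 - scale a k z ^ 2) := by
        rw [← sum_sub_distrib]
        simp only [mul_sub]
    _ ≤ ∑ k, α k * B k := by
        gcongr with k
        exacts [hα0 k, hB k]

theorem blockScale_mem_Ioc_and_inv_smul_mem
    {X : (k : Fin n) → Set (EuclideanSpace ℝ (Fin (s k)))}
    {z : (k : Fin n) → EuclideanSpace ℝ (Fin (s k))}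
    (hz : ∀ k : Fin n, (k.val = 0 → z k ∈ intrinsicInterior ℝ (X k)) ∧
      (k.val ≠ 0 → ∃ v ∈ intrinsicInterior ℝ (X k), z k = scale a k z • v))
    (hpos : ∀ k : Fin n, k.val ≠ 0 → 0 < scale a k z)
    (hle : ∀ k : Fin n, k.val ≠ 0 → scale a k z ≤ 1) (k : Fin n) :
    blockScale a k z ∈ Set.Ioc 0 1 ∧ (blockScale a k z)⁻¹ • z k ∈ intrinsicInterior ℝ (X k) := by
  by_cases hk : k.val = 0
  · simpa [blockScale, hk] using (hz k).1 hk
  · obtain ⟨v, hv, hzv⟩ := (hz k).2 hk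
    simp only [blockScale, hk, if_false]
    refine ⟨⟨hpos k hk, hle k hk⟩, ?_⟩
    rwa [hzv, inv_smul_smul₀ (hpos k hk).ne']

end ScaledChain

open ScaledChain

theorem chain_composite_dgf_one_strong_convexity_general
    {n : ℕ}
    (s : Fin n → ℕ) (hs : ∀ k, 0 < s k)
    (X : (k : Fin n) → Set (EuclideanSpace ℝ (Fin (s k))))
    (hXconv : ∀ k, Convex ℝ (X k)) (hXbd : ∀ k, ∀ v ∈ X k, ‖v‖ ≤ 1)
    (a : (k : Fin n) → (q : Fin n) → EuclideanSpace ℝ (Fin (s q)))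
    (ha : ∀ k q, q < k → ∀ i, a k q i ∈ Set.Icc (0 : ℝ) 1)
    (H : Fin n → ((k : Fin n) → EuclideanSpace ℝ (Fin (s k))) → ℝ)
    (hHdef : ∀ k x, H k x = ∑ q ∈ Finset.univ.filter (fun q => q < k), ⟪a k q, x q⟫)
    (memX memRelX : ((k : Fin n) → EuclideanSpace ℝ (Fin (s k))) → Prop)
    (hmemX : ∀ x, memX x ↔ ∀ k : Fin n,
        (k.val = 0 → x k ∈ X k) ∧ (k.val ≠ 0 → ∃ v ∈ X k, x k = H k x • v))
    (hmemRelX : ∀ x, memRelX x ↔ ∀ k : Fin n,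
        (k.val = 0 → x k ∈ intrinsicInterior ℝ (X k)) ∧
        (k.val ≠ 0 → ∃ v ∈ intrinsicInterior ℝ (X k), x k = H k x • v))
    (hH01 : ∀ x, memX x → ∀ k : Fin n, k.val ≠ 0 → 0 ≤ H k x ∧ H k x ≤ 1)
    (hHpos : ∀ x, memRelX x → ∀ k : Fin n, k.val ≠ 0 → 0 < H k x)
    (d : (k : Fin n) → EuclideanSpace ℝ (Fin (s k)) → ℝ)
    (g : (k : Fin n) → EuclideanSpace ℝ (Fin (s k)) → EuclideanSpace ℝ (Fin (s k)))
    (hdg : ∀ k, ∀ y ∈ intrinsicInterior ℝ (X k), HasGradientAt (d k) (g k y) y)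
    (hmono : ∀ k, ∀ y ∈ intrinsicInterior ℝ (X k), ∀ y' ∈ intrinsicInterior ℝ (X k),
        ⟪g k y - g k y', y - y'⟫ ≥ ‖y - y'‖ ^ 2)
    (α : Fin n → ℝ)
    (hαrec : ∀ k : Fin n, α k = 2 + 2 *
        (Finset.univ.sup' (Finset.univ_nonempty_iff.mpr (Fin.pos_iff_nonempty.mp (hs k)))
          (fun i : Fin (s k) =>
            |∑ p ∈ Finset.univ.filter (fun p => k < p),
              α p * ((∑ q ∈ Finset.univ.filter (fun q => q < p),
                  (Finset.univ.filter (fun i : Fin (s q) => a p q i ≠ 0)).card : ℕ) : ℝ)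
                * a p k i|)))
    (y : ((k : Fin n) → EuclideanSpace ℝ (Fin (s k))) → (k : Fin n) → EuclideanSpace ℝ (Fin (s k)))
    (hy : ∀ x k, y x k = if k.val = 0 then x k else (H k x)⁻¹ • x k)
    (G : ((k : Fin n) → EuclideanSpace ℝ (Fin (s k))) → (k : Fin n) → EuclideanSpace ℝ (Fin (s k)))
    (hG : ∀ x k, G x k = α k • g k (y x k)
        + ∑ p ∈ Finset.univ.filter (fun p => k < p),
            (α p * (d p (y x p) - ⟪g p (y x p), y x p⟫)) • a p k) :
    ∀ x x', memRelX x → memRelX x' →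
      ∑ k, ⟪G x k - G x' k, x k - x' k⟫ ≥ ∑ k, ∑ i, (x k i - x' k i) ^ 2 := by
  obtain rfl : H = scale a := funext fun k => funext (hHdef k)
  have hmemX_of_memRelX : ∀ z, memRelX z → memX z := fun z hz => (hmemX z).2 fun k =>
    ((hmemRelX z).1 hz k).imp (fun h hk => intrinsicInterior_subset (h hk))
      fun h hk => (h hk).imp fun _ => And.imp_left (intrinsicInterior_subset ·)
  have hblock : ∀ z, memRelX z → ∀ k, blockScale a k z ∈ Set.Ioc 0 1 ∧
      y z k ∈ intrinsicInterior ℝ (X k) ∧ z k = blockScale a k z • y z k := by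
    intro z hz k
    have hyz : y z k = (blockScale a k z)⁻¹ • z k := by
      rw [hy, blockScale]; split_ifs <;> simp
    obtain ⟨ht, hmem⟩ := blockScale_mem_Ioc_and_inv_smul_mem a ((hmemRelX z).1 hz) (hHpos z hz)
      (fun k hk => (hH01 z (hmemX_of_memRelX z hz) k hk).2) k
    exact ⟨ht, hyz ▸ hmem, by rw [hyz, smul_inv_smul₀ ht.1.ne']⟩
  intro x x' hx hx'
  have hnorm : ∀ k, ∑ i, (x k i - x' k i) ^ 2 = ‖(x - x') k‖ ^ 2 := fun k => by
    simp [EuclideanSpace.real_norm_sq_eq]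
  simp only [hG, hnorm, ge_iff_le]
  rw [sum_inner_sub_eq]
  refine sum_norm_sq_le_sum_mul a hs ha hαrec (x - x') fun k => ?_
  obtain ⟨ht, hu, hxk⟩ := hblock x hx k
  obtain ⟨ht', hu', hxk'⟩ := hblock x' hx' k
  have := perspective_block_of_mem_intrinsicInterior (hXconv k) (hXbd k) (hdg k) (hmono k) hu hu'
    ht.1.le ht.2 ht'.1.le ht'.2
  rwa [← hxk, ← hxk', blockScale_sub_blockScale] at this

/-- **Weights achieving 1-strong convexity of composite dilated DGFs** (Corollary 1).
Under the chain-of-scaled-extensions setup, with the coefficients chosen recursively as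
`α_n = 2`, `α_k = 2 + 2·‖∑_{p>k} α_p·‖a_p‖₀·a_{p,k}‖_∞`, the composite DGF `d` (with
gradient `G`) satisfies `⟨∇d(x) − ∇d(x'), x − x'⟩ ≥ ‖x − x'‖₂²` on
`(relint X_1) ◁^{h_1} ⋯ ◁^{h_{n−1}} (relint X_n)`, i.e., it is 1-strongly convex with
respect to the Euclidean norm. -/
theorem chain_composite_dgf_one_strong_convexity
    {n : ℕ} (hn : 0 < n)
    (s : Fin n → ℕ) (hs : ∀ k, 0 < s k)
    (X : (k : Fin n) → Set (EuclideanSpace ℝ (Fin (s k))))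
    (hXne : ∀ k, (X k).Nonempty) (hXcpt : ∀ k, IsCompact (X k))
    (hXconv : ∀ k, Convex ℝ (X k)) (hXbd : ∀ k, ∀ v ∈ X k, ‖v‖ ≤ 1)
    (a : (k : Fin n) → (q : Fin n) → EuclideanSpace ℝ (Fin (s q)))
    (ha : ∀ k q, q < k → ∀ i, a k q i ∈ Set.Icc (0 : ℝ) 1)
    (H : Fin n → ((k : Fin n) → EuclideanSpace ℝ (Fin (s k))) → ℝ)
    (hHdef : ∀ k x, H k x = ∑ q ∈ Finset.univ.filter (fun q => q < k), ⟪a k q, x q⟫)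
    (memX memRelX : ((k : Fin n) → EuclideanSpace ℝ (Fin (s k))) → Prop)
    (hmemX : ∀ x, memX x ↔ ∀ k : Fin n,
        (k.val = 0 → x k ∈ X k) ∧ (k.val ≠ 0 → ∃ v ∈ X k, x k = H k x • v))
    (hmemRelX : ∀ x, memRelX x ↔ ∀ k : Fin n,
        (k.val = 0 → x k ∈ intrinsicInterior ℝ (X k)) ∧
        (k.val ≠ 0 → ∃ v ∈ intrinsicInterior ℝ (X k), x k = H k x • v))
    (hH01 : ∀ x, memX x → ∀ k : Fin n, k.val ≠ 0 → 0 ≤ H k x ∧ H k x ≤ 1)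
    (hHpos : ∀ x, memRelX x → ∀ k : Fin n, k.val ≠ 0 → 0 < H k x)
    (d : (k : Fin n) → EuclideanSpace ℝ (Fin (s k)) → ℝ)
    (g : (k : Fin n) → EuclideanSpace ℝ (Fin (s k)) → EuclideanSpace ℝ (Fin (s k)))
    (hdc : ∀ k, ContinuousOn (d k) (X k))
    (hdg : ∀ k, ∀ y ∈ intrinsicInterior ℝ (X k), HasGradientAt (d k) (g k y) y)
    (hmono : ∀ k, ∀ y ∈ intrinsicInterior ℝ (X k), ∀ y' ∈ intrinsicInterior ℝ (X k),
        ⟪g k y - g k y', y - y'⟫ ≥ ‖y - y'‖ ^ 2)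
    (α : Fin n → ℝ)
    (hαrec : ∀ k : Fin n, α k = 2 + 2 *
        (Finset.univ.sup' (Finset.univ_nonempty_iff.mpr (Fin.pos_iff_nonempty.mp (hs k)))
          (fun i : Fin (s k) =>
            |∑ p ∈ Finset.univ.filter (fun p => k < p),
              α p * ((∑ q ∈ Finset.univ.filter (fun q => q < p),
                  (Finset.univ.filter (fun i : Fin (s q) => a p q i ≠ 0)).card : ℕ) : ℝ)
                * a p k i|)))
    (y : ((k : Fin n) → EuclideanSpace ℝ (Fin (s k))) → (k : Fin n) → EuclideanSpace ℝ (Fin (s k)))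
    (hy : ∀ x k, y x k = if k.val = 0 then x k else (H k x)⁻¹ • x k)
    (G : ((k : Fin n) → EuclideanSpace ℝ (Fin (s k))) → (k : Fin n) → EuclideanSpace ℝ (Fin (s k)))
    (hG : ∀ x k, G x k = α k • g k (y x k)
        + ∑ p ∈ Finset.univ.filter (fun p => k < p),
            (α p * (d p (y x p) - ⟪g p (y x p), y x p⟫)) • a p k) :
    ∀ x x', memRelX x → memRelX x' →
      ∑ k, ⟪G x k - G x' k, x k - x' k⟫ ≥ ∑ k, ∑ i, (x k i - x' k i) ^ 2 :=
  chain_composite_dgf_one_strong_convexity_general s hs X hXconv hXbd a ha H hHdef memX memRelX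
    hmemX hmemRelX hH01 hHpos d g hdg hmono α hαrec y hy G hG
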